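/- Let k be a field, R = k[x_1,…,x_n], and let ℓ_1,…,ℓ_n ∈ R_1 be k-linearly independent linear forms. Let I ⊆ R be a proper homogeneous 𝔪-primary ideal with dim_k Soc(R/I) = 1 and socle degree s. Suppose f is a homogeneous polynomial with I = (ℓ_1^{s+1},…,ℓ_n^{s+1}) : (f) such that, writing f = F(ℓ_1,…,ℓ_n) for a polynomial F in n variables, every exponent vector in the support of F has all coordinates ≤ s (i.e. no nonzero term of f, expressed in the ℓ's, lies in (ℓ_1^{s+1},…,ℓ_n^{s+1})). Let m₀ be the least integer m ≥ 1 such that ℓ_i^m ∈ I for all 1 ≤ i ≤ n (it exists and satisfies m₀ ≤ s+1), and set g := s + 1 − m₀ (the pure power gap of I with respect to ℓ_1,…,ℓ_n). Then (ℓ_1·ℓ_2⋯ℓ_n)^g divides f, and g is the largest integer with this property. -/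

import Mathlib

open MvPolynomial

/-- The maximal graded ideal `𝔪 = (x_1, …, x_n)` of `k[x_1,…,x_n]`. -/
noncomputable def mIdealN (k : Type*) [Field k] (n : ℕ) : Ideal (MvPolynomial (Fin n) k) :=
  Ideal.span (Set.range (X : Fin n → MvPolynomial (Fin n) k))

/-- `dim_k Soc(R/I)`, the total dimension of the socle `(I : 𝔪)/I` of `R/I`. -/
noncomputable def socDimN {k : Type*} [Field k] {n : ℕ}
    (I : Ideal (MvPolynomial (Fin n) k)) : ℕ :=
  Module.finrank k
    ↥(Submodule.map (Ideal.Quotient.mkₐ k I).toLinearMap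
      ((Submodule.colon I (mIdealN k n)).restrictScalars k))

/-!
Linearly independent linear forms `ℓ_1, …, ℓ_n` are the images of the variables under a
`k`-algebra automorphism `e` of `k[x_1, …, x_n]`, so `f = e F` and
`(ℓ_1^{s+1}, …, ℓ_n^{s+1}) = e (x_1^{s+1}, …, x_n^{s+1})` is a monomial ideal. Let `d` be the
least exponent of a variable occurring in a monomial of `F`. Then `(ℓ_1⋯ℓ_n)^K ∣ f` iff every
exponent of every monomial of `F` is at least `K`, and, because no exponent of `F` exceeds `s`,
`ℓ_i^m f` lies in the monomial ideal iff every monomial of `F` has `x_i`-exponent at least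
`s + 1 - m`. Hence `m₀ = s + 1 - d` and the largest power of `ℓ_1⋯ℓ_n` dividing `f` is `d`.
-/

namespace MvPolynomial

variable {σ R k : Type*}

section CommSemiring

variable [CommSemiring R]

theorem support_X_pow_mul (i : σ) (m : ℕ) (p : MvPolynomial σ R) :
    (X i ^ m * p).support = p.support.map (addLeftEmbedding (Finsupp.single i m)) := by
  rw [X_pow_eq_monomial]
  exact AddMonoidAlgebra.support_coeff_single_mul p 1 (by simp) _

theorem mem_span_range_X_pow_iff {N : ℕ} {p : MvPolynomial σ R} :
    p ∈ Ideal.span (Set.range fun i => (X i : MvPolynomial σ R) ^ N) ↔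
      ∀ α ∈ p.support, ∃ i, N ≤ α i := by
  have hgen : (Set.range fun i => (X i : MvPolynomial σ R) ^ N) =
      (fun u => monomial u (1 : R)) '' Set.range fun i => Finsupp.single i N := by
    simp [← Set.range_comp, Function.comp_def, X_pow_eq_monomial]
  simp [hgen, mem_ideal_span_monomial_image, Finsupp.single_le_iff]

theorem X_pow_mul_mem_span_range_X_pow_iff {N m : ℕ} {p : MvPolynomial σ R} (i : σ)
    (hp : ∀ α ∈ p.support, ∀ j, α j < N) :
    X i ^ m * p ∈ Ideal.span (Set.range fun j => (X j : MvPolynomial σ R) ^ N) ↔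
      ∀ α ∈ p.support, N ≤ α i + m := by
  classical
  simp only [mem_span_range_X_pow_iff, support_X_pow_mul, Finset.forall_mem_map,
    addLeftEmbedding_apply, Finsupp.add_apply, Finsupp.single_apply]
  refine forall₂_congr fun α hα => ⟨fun ⟨j, hj⟩ => ?_, fun h => ⟨i, by simpa [add_comm] using h⟩⟩
  by_cases hij : i = j
  · subst hij; simpa [add_comm] using hj
  · have := hp α hα j
    simp only [hij, ↓reduceIte, zero_add] at hj
    omega

theorem prod_X_pow_dvd_iff [Fintype σ] {K : ℕ} {p : MvPolynomial σ R} :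
    (∏ i, X i : MvPolynomial σ R) ^ K ∣ p ↔ ∀ α ∈ p.support, ∀ i, K ≤ α i := by
  classical
  rw [← Finset.prod_pow, prod_X_pow (fun _ => K), ← Ideal.mem_span_singleton,
    ← Set.image_singleton (f := fun u => monomial u (1 : R)), mem_ideal_span_monomial_image]
  simp [Finsupp.le_def]

end CommSemiring

section Field

variable [Field k] [Fintype σ]

theorem exists_isHomogeneous_one_aeval_eq_X {ℓ : σ → MvPolynomial σ k}
    (hhom : ∀ i, (ℓ i).IsHomogeneous 1) (hli : LinearIndependent k ℓ) (j : σ) :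
    ∃ q : MvPolynomial σ k, q.IsHomogeneous 1 ∧ aeval ℓ q = X j := by
  have hspan : Submodule.span k (Set.range ℓ) = Submodule.span k (Set.range X) := by
    have := FiniteDimensional.span_of_finite k (Set.finite_range (X : σ → MvPolynomial σ k))
    refine Submodule.eq_of_le_of_finrank_eq ?_ ?_
    · rw [Submodule.span_le, Set.range_subset_iff, ← homogeneousSubmodule_one_eq_span_X]
      exact hhom
    · rw [finrank_span_eq_card hli, finrank_span_eq_card (linearIndependent_X σ k)]
  obtain ⟨c, hc⟩ := (Submodule.mem_span_range_iff_exists_fun k).mp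
    (hspan ▸ Submodule.subset_span (Set.mem_range_self j) : X j ∈ Submodule.span k (Set.range ℓ))
  refine ⟨∑ i, c i • X i, ?_, by simpa using hc⟩
  rw [← mem_homogeneousSubmodule, homogeneousSubmodule_one_eq_span_X]
  exact Submodule.sum_mem _ fun i _ => Submodule.smul_mem _ _ (Submodule.subset_span ⟨i, rfl⟩)

theorem exists_algEquiv_eq_aeval {ℓ : σ → MvPolynomial σ k}
    (hhom : ∀ i, (ℓ i).IsHomogeneous 1) (hli : LinearIndependent k ℓ) :
    ∃ e : MvPolynomial σ k ≃ₐ[k] MvPolynomial σ k, ∀ p, e p = aeval ℓ p := by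
  choose ℓ' hhom' hℓ' using exists_isHomogeneous_one_aeval_eq_X hhom hli
  have hright : (aeval ℓ).comp (aeval ℓ') = AlgHom.id k _ := algHom_ext fun j => by
    simp only [AlgHom.comp_apply, aeval_X, hℓ', AlgHom.id_apply]
  have hli' : LinearIndependent k ℓ' :=
    .of_comp (aeval ℓ).toLinearMap (by
      rw [show ⇑(aeval ℓ).toLinearMap ∘ ℓ' = X from _root_.funext hℓ']; exact linearIndependent_X σ k)
  choose ℓ'' _ hℓ'' using exists_isHomogeneous_one_aeval_eq_X hhom' hli'
  have hright' : (aeval ℓ').comp (aeval ℓ'') = AlgHom.id k _ := algHom_ext fun j => by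
    simp only [AlgHom.comp_apply, aeval_X, hℓ'', AlgHom.id_apply]
  have hleft : (aeval ℓ').comp (aeval ℓ) = AlgHom.id k _ := by
    -- `aeval ℓ'` has `aeval ℓ` as a left and `aeval ℓ''` as a right inverse, so these agree.
    have : aeval (R := k) ℓ = aeval ℓ'' := by
      rw [← AlgHom.comp_id (aeval ℓ), ← hright', ← AlgHom.comp_assoc, hright, AlgHom.id_comp]
    rw [this, hright']
  exact ⟨.ofAlgHom _ _ hright hleft, fun _ => rfl⟩

end Field

end MvPolynomial

theorem Finset.exists_isLeast_and_isGreatest_gap {σ : Type*} [Nonempty σ]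
    {S : Finset (σ →₀ ℕ)} (hS : S.Nonempty) {s : ℕ} (hbox : ∀ α ∈ S, ∀ i, α i ≤ s) :
    ∃ m₀, IsLeast {m | 1 ≤ m ∧ ∀ i, ∀ α ∈ S, s + 1 ≤ α i + m} m₀ ∧ m₀ ≤ s + 1 ∧
      IsGreatest {K | ∀ α ∈ S, ∀ i, K ≤ α i} (s + 1 - m₀) := by
  obtain ⟨α, hα⟩ := hS
  obtain ⟨⟨α₀, i₀⟩, hα₀, hmin⟩ := (InvImage.wf (fun x : (σ →₀ ℕ) × σ => x.1 x.2)
    wellFounded_lt).has_min {x | x.1 ∈ S} ⟨(α, Classical.arbitrary σ), hα⟩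
  replace hmin : ∀ α ∈ S, ∀ i, α₀ i₀ ≤ α i := fun α hα i => not_lt.mp (hmin (α, i) hα)
  have hs := hbox α₀ hα₀ i₀
  refine ⟨s + 1 - α₀ i₀, ⟨⟨by omega, fun i α hα => ?_⟩, fun m ⟨_, hm⟩ => ?_⟩, by omega, ?_, ?_⟩
  · have := hmin α hα i
    omega
  · have := hm i₀ α₀ hα₀
    omega
  · intro α hα i
    have := hmin α hα i
    omega
  · intro K hK
    have := hK α₀ hα₀ i₀
    omega

theorem stmt18_general {k : Type*} [Field k] (n : ℕ) (hn : 1 ≤ n)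
    (ℓ : Fin n → MvPolynomial (Fin n) k)
    (hhom : ∀ i, (ℓ i).IsHomogeneous 1)
    (hli : LinearIndependent k ℓ)
    (I : Ideal (MvPolynomial (Fin n) k))
    (hproper : I ≠ ⊤)
    (s : ℕ)
    (f : MvPolynomial (Fin n) k)
    (hcolon : I = Submodule.colon
      (Ideal.span (Set.range fun i => ℓ i ^ (s + 1))) (Ideal.span {f}))
    (hsupp : ∃ F : MvPolynomial (Fin n) k,
      MvPolynomial.aeval ℓ F = f ∧ ∀ α ∈ F.support, ∀ i, α i ≤ s) :
    ∃ m₀ : ℕ,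
      IsLeast {m : ℕ | 1 ≤ m ∧ ∀ i, ℓ i ^ m ∈ I} m₀
      ∧ m₀ ≤ s + 1
      ∧ IsGreatest {K : ℕ | (∏ i, ℓ i) ^ K ∣ f} (s + 1 - m₀) := by
  obtain ⟨e, he⟩ := exists_algEquiv_eq_aeval hhom hli
  obtain ⟨F, rfl, hbox⟩ := hsupp
  have hspan : Ideal.span (Set.range fun i => ℓ i ^ (s + 1)) =
      (Ideal.span (Set.range fun i => (X i : MvPolynomial (Fin n) k) ^ (s + 1))).map e := by
    simp [Ideal.map_span, ← Set.range_comp, Function.comp_def, he]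
  have hpow : ∀ m i, ℓ i ^ m ∈ I ↔ ∀ α ∈ F.support, s + 1 ≤ α i + m := by
    intro m i
    rw [hcolon, Submodule.mem_colon_span_singleton, smul_eq_mul,
      show ℓ i ^ m * aeval ℓ F = e (X i ^ m * F) by simp [he], hspan,
      Ideal.mem_map_of_equiv]
    simp only [EmbeddingLike.apply_eq_iff_eq, exists_eq_right]
    exact X_pow_mul_mem_span_range_X_pow_iff i fun α hα j => Nat.lt_succ_of_le (hbox α hα j)
  have hdvd : ∀ K, (∏ i, ℓ i) ^ K ∣ aeval ℓ F ↔ ∀ α ∈ F.support, ∀ i, K ≤ α i := by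
    intro K
    rw [← prod_X_pow_dvd_iff, ← map_dvd_iff e (a := (∏ i, X i) ^ K)]
    simp only [map_pow, map_prod, he, aeval_X]
  have hF : F.support.Nonempty := by
    rw [Finset.nonempty_iff_ne_empty, Ne, support_eq_empty]
    rintro rfl
    exact hproper (by simp [hcolon])
  have : Nonempty (Fin n) := ⟨⟨0, hn⟩⟩
  simp only [hpow, hdvd]
  exact Finset.exists_isLeast_and_isGreatest_gap hF hbox

/-- Let `I ⊆ k[x_1,…,x_n]` be a proper homogeneous `𝔪`-primary Gorenstein ideal with socle
degree `s`, let `ℓ_1,…,ℓ_n` be linearly independent linear forms, and suppose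
`I = (ℓ_1^{s+1},…,ℓ_n^{s+1}) : (f)` for a homogeneous `f` no term of which (written as a
polynomial `F` in the `ℓ`'s) lies in `(ℓ_1^{s+1},…,ℓ_n^{s+1})`. Then the least `m₀ ≥ 1`
with all `ℓ_i^{m₀} ∈ I` exists, satisfies `m₀ ≤ s+1`, and the pure power gap
`g = s+1−m₀` is the largest integer such that `(ℓ_1⋯ℓ_n)^g` divides `f`. -/
theorem stmt18 {k : Type*} [Field k] (n : ℕ) (hn : 1 ≤ n)
    (ℓ : Fin n → MvPolynomial (Fin n) k)
    (hhom : ∀ i, (ℓ i).IsHomogeneous 1)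
    (hli : LinearIndependent k ℓ)
    (I : Ideal (MvPolynomial (Fin n) k))
    (hproper : I ≠ ⊤)
    (hprim : ∃ N : ℕ, 1 ≤ N ∧ (mIdealN k n) ^ N ≤ I)
    (hsoc : socDimN I = 1)
    (s : ℕ)
    (hs : IsGreatest {t : ℕ | ∃ h : MvPolynomial (Fin n) k, h.IsHomogeneous t ∧ h ∉ I} s)
    (f : MvPolynomial (Fin n) k) (hfhom : ∃ e : ℕ, f.IsHomogeneous e)
    (hcolon : I = Submodule.colon
      (Ideal.span (Set.range fun i => ℓ i ^ (s + 1))) (Ideal.span {f}))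
    (hsupp : ∃ F : MvPolynomial (Fin n) k,
      MvPolynomial.aeval ℓ F = f ∧ ∀ α ∈ F.support, ∀ i, α i ≤ s) :
    ∃ m₀ : ℕ,
      IsLeast {m : ℕ | 1 ≤ m ∧ ∀ i, ℓ i ^ m ∈ I} m₀
      ∧ m₀ ≤ s + 1
      ∧ IsGreatest {K : ℕ | (∏ i, ℓ i) ^ K ∣ f} (s + 1 - m₀) :=
  stmt18_general n hn ℓ hhom hli I hproper s f hcolon hsupp
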